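/- Let X be a metric space with bounded geometry and p ∈ [1,∞). Let (x₁ⁿ, x₂ⁿ)_{n∈ℕ} be a sequence of pairwise distinct pairs in X × X with d(x₁ⁿ, x₂ⁿ) ≤ R for all n, and such that moreover the x₁ⁿ are pairwise distinct and the x₂ⁿ are pairwise distinct. Then the series Σₙ e_{x₁ⁿ, x₂ⁿ} of matrix units converges in the strong operator topology to a bounded operator on ℓ^p(X) of norm at most 1 and of propagation at most R; in particular, this operator lies in the ℓ^p uniform Roe algebra B^p_u(X). -/

import Mathlib

open scoped ENNReal

/-- A map between (pseudo)metric spaces is uniformly expansive if points at distance at most `R`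
are sent to points at distance at most `S = S(R)`. -/
def UniformlyExpansive {X Y : Type*} [PseudoMetricSpace X] [PseudoMetricSpace Y]
    (f : X → Y) : Prop :=
  ∀ R : ℝ, 0 < R → ∃ S : ℝ, 0 < S ∧ ∀ x₁ x₂ : X, dist x₁ x₂ ≤ R → dist (f x₁) (f x₂) ≤ S

/-- Two maps are close if they are at uniformly bounded distance. -/
def Close {X Y : Type*} [PseudoMetricSpace Y] (f g : X → Y) : Prop :=
  ∃ C : ℝ, 0 < C ∧ ∀ x : X, dist (f x) (g x) ≤ C

/-- `f : X → Y` is a coarse equivalence if it is uniformly expansive and admits a uniformly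
expansive coarse inverse. -/
def IsCoarseEquivalence {X Y : Type*} [PseudoMetricSpace X] [PseudoMetricSpace Y]
    (f : X → Y) : Prop :=
  UniformlyExpansive f ∧
    ∃ g : Y → X, UniformlyExpansive g ∧ Close (f ∘ g) id ∧ Close (g ∘ f) id

/-- A metric space has bounded geometry if balls of radius `R` have uniformly bounded
cardinality. -/
def BoundedGeometry (X : Type*) [PseudoMetricSpace X] : Prop :=
  ∀ R : ℝ, 0 ≤ R → ∃ N : ℕ, ∀ x : X,
    (Metric.closedBall x R).Finite ∧ (Metric.closedBall x R).ncard ≤ N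

/-- The standard basis vector `δ_x` of `ℓ^p(X)`. -/
noncomputable def delta {X : Type*} (p : ℝ≥0∞) (x : X) : lp (fun _ : X => ℂ) p :=
  letI := Classical.decEq X
  lp.single p x 1

/-- The matrix coefficient `T_{xy} = (T δ_y)(x)` of a bounded operator on `ℓ^p`. -/
noncomputable def matCoef {X Y : Type*} (p : ℝ≥0∞) [Fact (1 ≤ p)]
    (T : lp (fun _ : X => ℂ) p →L[ℂ] lp (fun _ : Y => ℂ) p) (y : Y) (x : X) : ℂ :=
  T (delta p x) y

/-- `T` has propagation at most `R`. -/
def HasPropagationLE {X : Type*} [PseudoMetricSpace X] (p : ℝ≥0∞) [Fact (1 ≤ p)]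
    (T : lp (fun _ : X => ℂ) p →L[ℂ] lp (fun _ : X => ℂ) p) (R : ℝ) : Prop :=
  ∀ x y : X, matCoef p T x y ≠ 0 → dist x y ≤ R

/-- `T` has finite propagation. -/
def FiniteProp {X : Type*} [PseudoMetricSpace X] (p : ℝ≥0∞) [Fact (1 ≤ p)]
    (T : lp (fun _ : X => ℂ) p →L[ℂ] lp (fun _ : X => ℂ) p) : Prop :=
  ∃ R : ℝ, 0 ≤ R ∧ HasPropagationLE p T R

/-- The `ℓ^p` uniform Roe algebra of `X`, as the operator-norm closure of the set of
finite propagation bounded operators on `ℓ^p(X)`. -/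
noncomputable def RoeAlgSet (X : Type*) [PseudoMetricSpace X] (p : ℝ≥0∞) [Fact (1 ≤ p)] :
    Set (lp (fun _ : X => ℂ) p →L[ℂ] lp (fun _ : X => ℂ) p) :=
  closure {T | FiniteProp p T}

/-!
Since the `x₁ⁿ` are distinct, `Σₙ ξ(x₂ⁿ) δ_{x₁ⁿ}` is just the function that takes the value
`ξ(x₂ⁿ)` at `x₁ⁿ` and vanishes off `{x₁ⁿ}`, i.e. `ξ ∘ x₂` extended by zero along `x₁`. Since the
`x₂ⁿ` are distinct, its `ℓ^p` norm is at most `‖ξ‖_p`, and the series converges to it because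
the expansion of an `ℓ^p` vector in the basis `δ_x` does (`p < ∞`). The only nonzero matrix
coefficients are at the pairs `(x₁ⁿ, x₂ⁿ)`, so the propagation is at most `R`.
-/

open Function

section ExtendByZero

variable {ι X E : Type*} [NormedAddCommGroup E] {p : ℝ≥0∞}

lemma norm_rpow_extend_zero {e : ι → X} (g : ι → E) {q : ℝ} (hq : q ≠ 0) :
    (fun x => ‖extend e g 0 x‖ ^ q) = extend e (fun i => ‖g i‖ ^ q) 0 := by
  have hzero : (fun v : E => ‖v‖ ^ q) ∘ (0 : X → E) = 0 := by
    funext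
    simp [Real.zero_rpow hq]
  funext x
  rw [apply_extend (fun v : E => ‖v‖ ^ q), hzero]
  rfl

lemma Memℓp.comp_injective {f : X → E} (hf : Memℓp f p) {e : ι → X} (he : Injective e)
    (hp : 0 < p.toReal) : Memℓp (f ∘ e) p :=
  (memℓp_gen_iff hp).2 (((memℓp_gen_iff hp).1 hf).comp_injective he)

lemma Memℓp.extend_zero {g : ι → E} (hg : Memℓp g p) {e : ι → X} (he : Injective e)
    (hp : 0 < p.toReal) : Memℓp (extend e g 0) p := by
  rw [memℓp_gen_iff hp, norm_rpow_extend_zero g hp.ne', summable_extend_zero he]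
  exact (memℓp_gen_iff hp).1 hg

lemma tsum_norm_rpow_extend_comp_le {f : X → E} {q : ℝ} (hq : 0 < q)
    (hf : Summable fun x => ‖f x‖ ^ q) {x₁ x₂ : ι → X} (h₁ : Injective x₁) (h₂ : Injective x₂) :
    ∑' x, ‖extend x₁ (f ∘ x₂) 0 x‖ ^ q ≤ ∑' x, ‖f x‖ ^ q := by
  rw [norm_rpow_extend_zero _ hq.ne', tsum_extend_zero h₁]
  exact tsum_comp_le_tsum_of_inj hf (fun _ => by positivity) h₂

end ExtendByZero

section PartialTranslation

variable {ι X 𝕜 E : Type*} [NontriviallyNormedField 𝕜] [NormedAddCommGroup E] [NormedSpace 𝕜 E]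
  {p : ℝ≥0∞} [Fact (1 ≤ p)] {x₁ x₂ : ι → X}

lemma toReal_pos_of_ne_top (hp : p ≠ ∞) : 0 < p.toReal :=
  ENNReal.toReal_pos (zero_lt_one.trans_le Fact.out).ne' hp

/-- The sum of matrix units `Σᵢ e_{x₁ i, x₂ i}`, i.e. `ξ ↦ Σᵢ ξ(x₂ i) δ_{x₁ i}`. -/
noncomputable def partialTranslation (hp : p ≠ ∞) (h₁ : Injective x₁) (h₂ : Injective x₂) :
    lp (fun _ : X => E) p →L[𝕜] lp (fun _ : X => E) p :=
  LinearMap.mkContinuous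
    { toFun := fun ξ => ⟨extend x₁ (ξ ∘ x₂) 0,
        ((lp.memℓp ξ).comp_injective h₂ (toReal_pos_of_ne_top hp)).extend_zero h₁
          (toReal_pos_of_ne_top hp)⟩
      map_add' := fun ξ η => lp.ext <| by
        simpa only [add_zero, lp.coeFn_add, Pi.add_comp] using
          extend_add x₁ (ξ ∘ x₂) (η ∘ x₂) 0 0
      map_smul' := fun c ξ => lp.ext <| by
        simpa only [smul_zero, lp.coeFn_smul, Pi.smul_comp, RingHom.id_apply] using
          extend_smul c x₁ (ξ ∘ x₂) 0 }
    1 fun ξ => by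
      have hp' := toReal_pos_of_ne_top hp
      rw [one_mul]
      refine lp.norm_le_of_tsum_le hp' (norm_nonneg ξ) ?_
      rw [lp.norm_rpow_eq_tsum hp']
      exact tsum_norm_rpow_extend_comp_le hp' ((memℓp_gen_iff hp').1 ξ.2) h₁ h₂

variable (hp : p ≠ ∞) (h₁ : Injective x₁) (h₂ : Injective x₂)

@[simp]
lemma partialTranslation_apply_apply_self (ξ : lp (fun _ : X => E) p) (i : ι) :
    partialTranslation (𝕜 := 𝕜) hp h₁ h₂ ξ (x₁ i) = ξ (x₂ i) :=
  h₁.extend_apply _ _ _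

lemma partialTranslation_apply_apply_of_notMem_range (ξ : lp (fun _ : X => E) p) {x : X}
    (hx : x ∉ Set.range x₁) : partialTranslation (𝕜 := 𝕜) hp h₁ h₂ ξ x = 0 :=
  extend_apply' _ _ _ hx

lemma norm_partialTranslation_le : ‖partialTranslation (𝕜 := 𝕜) (E := E) hp h₁ h₂‖ ≤ 1 :=
  LinearMap.mkContinuous_norm_le _ zero_le_one _

lemma hasSum_partialTranslation [DecidableEq X] (ξ : lp (fun _ : X => E) p) :
    HasSum (fun i => lp.single p (x₁ i) (ξ (x₂ i))) (partialTranslation (𝕜 := 𝕜) hp h₁ h₂ ξ) := by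
  have hzero : ∀ x ∉ Set.range x₁,
      (lp.single p x (partialTranslation (𝕜 := 𝕜) hp h₁ h₂ ξ x) : lp (fun _ : X => E) p) = 0 :=
    fun x hx => by rw [partialTranslation_apply_apply_of_notMem_range hp h₁ h₂ ξ hx, lp.single_zero]
  simpa only [comp_def, partialTranslation_apply_apply_self] using
    (h₁.hasSum_iff hzero).2 (lp.hasSum_single hp (partialTranslation (𝕜 := 𝕜) hp h₁ h₂ ξ))

end PartialTranslation

section MatrixUnits

variable {X : Type*} {p : ℝ≥0∞}

lemma delta_apply_of_ne {x y : X} (h : x ≠ y) : delta p y x = 0 := by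
  let := Classical.decEq X
  exact lp.single_apply_ne p y 1 h

lemma smul_delta [DecidableEq X] (c : ℂ) (x : X) : c • delta p x = lp.single p x c := by
  rw [delta, Subsingleton.elim (Classical.decEq X) ‹_›, ← lp.single_smul, smul_eq_mul, mul_one]

lemma hasPropagationLE_partialTranslation [PseudoMetricSpace X] [Fact (1 ≤ p)] {ι : Type*}
    {x₁ x₂ : ι → X} (hp : p ≠ ∞) (h₁ : Injective x₁) (h₂ : Injective x₂) {R : ℝ}
    (hdist : ∀ i, dist (x₁ i) (x₂ i) ≤ R) :
    HasPropagationLE p (partialTranslation (𝕜 := ℂ) hp h₁ h₂) R := by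
  intro x y hxy
  by_cases hx : x ∈ Set.range x₁
  · obtain ⟨i, rfl⟩ := hx
    have hy : x₂ i = y := by
      by_contra hne
      exact hxy (by simp [matCoef, delta_apply_of_ne hne])
    exact hy ▸ hdist i
  · exact absurd (partialTranslation_apply_apply_of_notMem_range hp h₁ h₂ _ hx) hxy

lemma mem_roeAlgSet_of_hasPropagationLE [PseudoMetricSpace X] [Fact (1 ≤ p)]
    {T : lp (fun _ : X => ℂ) p →L[ℂ] lp (fun _ : X => ℂ) p} {R : ℝ} (hR : 0 ≤ R)
    (hT : HasPropagationLE p T R) : T ∈ RoeAlgSet X p :=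
  subset_closure ⟨R, hR, hT⟩

end MatrixUnits

theorem sum_of_matrix_units_in_Roe_algebra_general {X : Type*} [MetricSpace X]
    (p : ℝ≥0∞) [Fact (1 ≤ p)] (hp : p ≠ ∞)
    (R : ℝ) (x₁ x₂ : ℕ → X)
    (hdist : ∀ n : ℕ, dist (x₁ n) (x₂ n) ≤ R)
    (hinj₁ : Function.Injective x₁) (hinj₂ : Function.Injective x₂) :
    ∃ T : lp (fun _ : X => ℂ) p →L[ℂ] lp (fun _ : X => ℂ) p,
      (∀ ξ : lp (fun _ : X => ℂ) p,
        HasSum (fun n : ℕ => (ξ (x₂ n)) • delta p (x₁ n)) (T ξ)) ∧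
      ‖T‖ ≤ 1 ∧ HasPropagationLE p T R ∧ T ∈ RoeAlgSet X p := by
  classical
  have hprop := hasPropagationLE_partialTranslation hp hinj₁ hinj₂ hdist
  refine ⟨partialTranslation hp hinj₁ hinj₂, fun ξ => ?_, norm_partialTranslation_le hp _ _,
    hprop, mem_roeAlgSet_of_hasPropagationLE (dist_nonneg.trans (hdist 0)) hprop⟩
  simpa only [smul_delta] using hasSum_partialTranslation hp hinj₁ hinj₂ ξ

/-- Let `(x₁ⁿ, x₂ⁿ)` be pairwise distinct pairs in `X × X` (indeed with the `x₁ⁿ` pairwise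
distinct and the `x₂ⁿ` pairwise distinct) with `d(x₁ⁿ, x₂ⁿ) ≤ R`. Then the series of matrix
units `Σₙ e_{x₁ⁿ, x₂ⁿ}` converges in the strong operator topology to a bounded operator of
norm at most `1` and propagation at most `R`, which lies in `B^p_u(X)`. -/
theorem sum_of_matrix_units_in_Roe_algebra {X : Type*} [MetricSpace X]
    (hX : BoundedGeometry X) (p : ℝ≥0∞) [Fact (1 ≤ p)] (hp : p ≠ ∞)
    (R : ℝ) (hR : 0 ≤ R) (x₁ x₂ : ℕ → X)
    (hdist : ∀ n : ℕ, dist (x₁ n) (x₂ n) ≤ R)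
    (hinj₁ : Function.Injective x₁) (hinj₂ : Function.Injective x₂) :
    ∃ T : lp (fun _ : X => ℂ) p →L[ℂ] lp (fun _ : X => ℂ) p,
      (∀ ξ : lp (fun _ : X => ℂ) p,
        HasSum (fun n : ℕ => (ξ (x₂ n)) • delta p (x₁ n)) (T ξ)) ∧
      ‖T‖ ≤ 1 ∧ HasPropagationLE p T R ∧ T ∈ RoeAlgSet X p :=
  sum_of_matrix_units_in_Roe_algebra_general p hp R x₁ x₂ hdist hinj₁ hinj₂
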